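/- Let x* be the unique fixed point of the λ-discounted projected one-step update g^(λ) with λ ∈ (1 - 1/(t⁺ + ‖x*‖₁), 1), and suppose an integral switching flow z exists. Then the discounted flow y defined by y(v,s₀(v)) = λh₀(x*'_v), y(v,s₁(v)) = λh₁(x*'_v) (with x*' the extension of x* by the token numbers on T) satisfies Σ_{v∈T} y⁻(v) > t⁺ - 1. -/

import Mathlib

/-!
Every edge is the out-edge of exactly one vertex, so the total inflow of the discounted flow equals
its total outflow `λ (t⁺ + ‖x*‖₁)`, because `h₀ + h₁ = id`. At a non-terminal the inflow is
`λ g(x*)_v = x*_v`, so the terminals receive `λ (t⁺ + ‖x*‖₁) - ‖x*‖₁`, which exceeds `t⁺ - 1`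
exactly when `(1 - λ)(t⁺ + ‖x*‖₁) < 1`.
-/

open Finset

noncomputable def h0 (x : ℝ) : ℝ := min (x - ⌊x / 2⌋) ⌈x / 2⌉
noncomputable def h1 (x : ℝ) : ℝ := max (⌊x / 2⌋ : ℝ) (x - ⌈x / 2⌉)

/-- One-step update of the switch graph `(V, s0, s1)`. -/
noncomputable def oneStep {V : Type*} [Fintype V] [DecidableEq V]
    (s0 s1 : V → V) (x : V → ℝ) : V → ℝ :=
  fun v => (∑ u : V, if s0 u = v then h0 (x u) else 0)
    + (∑ u : V, if s1 u = v then h1 (x u) else 0)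

/-- Outflow of `v` in an edge flow `y`, where `y v false` is the value on the
    even out-edge `(v, s0 v)` and `y v true` on the odd out-edge `(v, s1 v)`. -/
def outflowR {V : Type*} (y : V → Bool → ℝ) (v : V) : ℝ := y v false + y v true

/-- Inflow of `v` in an edge flow `y`. -/
def inflowR {V : Type*} [Fintype V] [DecidableEq V]
    (s0 s1 : V → V) (y : V → Bool → ℝ) (v : V) : ℝ :=
  (∑ u : V, if s0 u = v then y u false else 0)
    + (∑ u : V, if s1 u = v then y u true else 0)

lemma h0_add_h1 (x : ℝ) : h0 x + h1 x = x := by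
  unfold h0 h1
  rcases le_total (x - ⌊x / 2⌋) (⌈x / 2⌉ : ℝ) with h | h
  · rw [min_eq_left h, max_eq_left (by linarith)]; ring
  · rw [min_eq_right h, max_eq_right (by linarith)]; ring

lemma sub_one_lt_mul_of_one_sub_one_div_lt {D lam : ℝ} (hD : 0 ≤ D) (h : 1 - 1 / D < lam) :
    D - 1 < lam * D := by
  rcases hD.eq_or_lt with rfl | hpos
  · simp
  · have : (1 - lam) * D < 1 := (lt_div_iff₀ hpos).mp (by linarith)
    linarith

section SwitchGraph

variable {V : Type*} [Fintype V] [DecidableEq V] (s0 s1 : V → V)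

theorem sum_inflowR_eq_sum_outflowR (y : V → Bool → ℝ) :
    ∑ v, inflowR s0 s1 y v = ∑ v, outflowR y v := by
  simp only [inflowR, outflowR, sum_add_distrib]
  rw [sum_comm, sum_comm (f := fun v u => if s1 u = v then y u true else 0)]
  simp

variable {y : V → Bool → ℝ} {lam : ℝ} {x : V → ℝ}

lemma inflowR_eq_mul_oneStep
    (hy : ∀ v, y v false = lam * h0 (x v) ∧ y v true = lam * h1 (x v)) (v : V) :
    inflowR s0 s1 y v = lam * oneStep s0 s1 x v := by
  simp only [inflowR, oneStep, mul_add, mul_sum, mul_ite, mul_zero, (hy _).1, (hy _).2]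

omit [Fintype V] [DecidableEq V] in
lemma outflowR_eq_mul
    (hy : ∀ v, y v false = lam * h0 (x v) ∧ y v true = lam * h1 (x v)) (v : V) :
    outflowR y v = lam * x v := by
  rw [outflowR, (hy v).1, (hy v).2, ← mul_add, h0_add_h1]

end SwitchGraph

theorem discounted_fixed_point_terminal_inflow_general
    {V : Type*} [Fintype V] [DecidableEq V]
    (s0 s1 : V → V) (T : Finset V)
    (t : V → ℕ)
    (xstar : V → ℝ) (hxstar : ∀ v, 0 ≤ xstar v)
    (ext : V → ℝ) (hext : ∀ v, ext v = if v ∈ T then (t v : ℝ) else xstar v)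
    (lam : ℝ)
    (hlam : 1 - 1 / ((∑ v ∈ T, t v : ℕ) + ∑ v ∈ Tᶜ, |xstar v|) < lam)
    (hfix : ∀ v ∉ T, lam * oneStep s0 s1 ext v = xstar v)
    (y : V → Bool → ℝ)
    (hy : ∀ v, y v false = lam * h0 (ext v) ∧ y v true = lam * h1 (ext v)) :
    ((∑ v ∈ T, t v : ℕ) : ℝ) - 1 < ∑ v ∈ T, inflowR s0 s1 y v := by
  have hnorm : ∑ v ∈ Tᶜ, |xstar v| = ∑ v ∈ Tᶜ, xstar v :=
    sum_congr rfl fun v _ => abs_of_nonneg (hxstar v)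
  have hsum_ext : ∑ v, ext v = ((∑ v ∈ T, t v : ℕ) : ℝ) + ∑ v ∈ Tᶜ, xstar v := by
    rw [← sum_add_sum_compl T, Nat.cast_sum]
    congr 1
    · exact sum_congr rfl fun v hv => by rw [hext, if_pos hv]
    · exact sum_congr rfl fun v hv => by rw [hext, if_neg (mem_compl.mp hv)]
  have htotal : ∑ v, inflowR s0 s1 y v = lam * ∑ v, ext v := by
    rw [sum_inflowR_eq_sum_outflowR, mul_sum]
    exact sum_congr rfl fun v _ => outflowR_eq_mul hy v
  have hnonterminal : ∑ v ∈ Tᶜ, inflowR s0 s1 y v = ∑ v ∈ Tᶜ, xstar v :=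
    sum_congr rfl fun v hv => by
      rw [inflowR_eq_mul_oneStep s0 s1 hy, hfix v (mem_compl.mp hv)]
  have hD : 0 ≤ ((∑ v ∈ T, t v : ℕ) : ℝ) + ∑ v ∈ Tᶜ, xstar v :=
    add_nonneg (Nat.cast_nonneg _) (sum_nonneg fun v _ => hxstar v)
  have hgap := sub_one_lt_mul_of_one_sub_one_div_lt hD (hnorm ▸ hlam)
  rw [← sum_add_sum_compl T, hnonterminal, hsum_ext] at htotal
  linarith

theorem discounted_fixed_point_terminal_inflow
    {V : Type*} [Fintype V] [DecidableEq V]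
    (s0 s1 : V → V) (T : Finset V) (hT : T.Nonempty)
    (t : V → ℕ) (htot : 1 ≤ ∑ v ∈ T, t v)
    (xstar : V → ℝ) (hxstar : ∀ v, 0 ≤ xstar v)
    (ext : V → ℝ) (hext : ∀ v, ext v = if v ∈ T then (t v : ℝ) else xstar v)
    (lam : ℝ)
    (hlam : 1 - 1 / ((∑ v ∈ T, t v : ℕ) + ∑ v ∈ Tᶜ, |xstar v|) < lam)
    (hlam1 : lam < 1)
    (hfix : ∀ v ∉ T, lam * oneStep s0 s1 ext v = xstar v)
    (y : V → Bool → ℝ)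
    (hy : ∀ v, y v false = lam * h0 (ext v) ∧ y v true = lam * h1 (ext v))
    (z : V → Bool → ℕ)
    (hzswitch : ∀ v, z v true ≤ z v false ∧ z v false ≤ z v true + 1)
    (hzcons : ∀ v ∉ T, (z v false + z v true : ℕ) =
      (∑ u : V, if s0 u = v then z u false else 0)
        + (∑ u : V, if s1 u = v then z u true else 0))
    (hzterm : ∀ v ∈ T, (z v false + z v true : ℕ) = t v) :
    ((∑ v ∈ T, t v : ℕ) : ℝ) - 1 < ∑ v ∈ T, inflowR s0 s1 y v :=
  discounted_fixed_point_terminal_inflow_general s0 s1 T t xstar hxstar ext hext lam hlam hfix y hy
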